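/- Let J ∈ L¹(ℝⁿ) be nonnegative, even, not identically zero, with finite second moments whose second-moment matrix ∫ J(x) x⊗x dx is positive definite. Then Ψ(ξ) := (2π)^{-n}(𝓕[J](0) − 𝓕[J](ξ)) satisfies Ψ(ξ) > 0 for all ξ ≠ 0, and by the Riemann–Lebesgue lemma Ψ(ξ) → (2π)^{-n} 𝓕[J](0) > 0 as |ξ| → ∞; consequently there exist constants c₀, c₁ > 0 with Ψ(ξ) ≥ c₀|ξ|² for |ξ| ≤ 1 and Ψ(ξ) ≥ c₁ for |ξ| ≥ 1. -/

import Mathlib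

/-!
Write `Ψ ξ = (2π)⁻ⁿ ∫ J x (1 - cos (ξ ⬝ᵥ x)) dx`. For `ξ ≠ 0` the integrand is nonnegative and
vanishes (where `J > 0`) only on the null set `ξ ⬝ᵥ x ∈ 2πℤ`, so `Ψ ξ > 0`. Identifying `FT J` with
a Fourier integral on the dual space gives continuity and, by Riemann–Lebesgue, the limit at
infinity. Near the origin, `1 - cos s = s² / 2 · sinc (s / 2)²` gives the exact second-order
expansion `Ψ (t • u) = (2π)⁻ⁿ t² / 2 · ∫ J x (x ⬝ᵥ u)² sinc (t (x ⬝ᵥ u) / 2)² dx`; the integral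
is continuous and positive on `[0, 1] × {|u| = 1}` (at `t = 0` it is the second-moment form), hence
bounded below by compactness. Away from the origin, a continuous positive function with a positive
limit at infinity is bounded below on any closed set.
-/

open MeasureTheory Real Filter

noncomputable section

/-- Fourier transform on ℝⁿ with the convention 𝓕[J](ξ) = ∫ e^{-i ξ·x} J(x) dx. -/
def FT {n : ℕ} (J : (Fin n → ℝ) → ℝ) (ξ : Fin n → ℝ) : ℂ :=
  ∫ x : Fin n → ℝ, Complex.exp (-(Complex.I * ((∑ i, ξ i * x i : ℝ) : ℂ))) * (J x : ℂ)

open Topology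
open scoped FourierTransform

theorem Real.ae_cos_ne_one : ∀ᵐ t : ℝ, cos t ≠ 1 :=
  ((Set.countable_range fun k : ℤ => (k : ℝ) * (2 * π)).ae_notMem volume).mono
    fun t ht h => ht ((cos_eq_one_iff t).1 h)

theorem Real.one_sub_cos_eq_sq_mul_sinc_sq (s : ℝ) :
    1 - cos s = s ^ 2 / 2 * sinc (s / 2) ^ 2 := by
  rcases eq_or_ne s 0 with rfl | hs
  · simp
  · have hcos : cos s = 1 - 2 * sin (s / 2) ^ 2 := by
      have h := cos_two_mul (s / 2)
      rw [mul_div_cancel₀ s two_ne_zero] at h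
      linarith [sin_sq_add_cos_sq (s / 2)]
    rw [sinc_of_ne_zero (div_ne_zero hs two_ne_zero), hcos]
    field_simp
    ring

section

variable {X : Type*} [TopologicalSpace X]

theorem IsCompact.exists_pos_forall_le_of_pos {K : Set X} {f : X → ℝ} (hK : IsCompact K)
    (hf : ContinuousOn f K) (hpos : ∀ x ∈ K, 0 < f x) : ∃ c > 0, ∀ x ∈ K, c ≤ f x := by
  rcases K.eq_empty_or_nonempty with rfl | hne
  · exact ⟨1, one_pos, by simp⟩
  · obtain ⟨x₀, hx₀, hmin⟩ := hK.exists_isMinOn hne hf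
    exact ⟨f x₀, hpos x₀ hx₀, fun x hx => hmin hx⟩

theorem exists_pos_forall_le_of_tendsto_cocompact {S : Set X} {f : X → ℝ} {L : ℝ}
    (hS : IsClosed S) (hf : ContinuousOn f S) (hpos : ∀ x ∈ S, 0 < f x) (hL : 0 < L)
    (hlim : Tendsto f (cocompact X) (𝓝 L)) : ∃ c > 0, ∀ x ∈ S, c ≤ f x := by
  obtain ⟨K, hK, hKf⟩ :=
    mem_cocompact.1 (hlim.eventually (eventually_gt_nhds (half_lt_self hL)))
  obtain ⟨c, hc, hcK⟩ := (hK.inter_right hS).exists_pos_forall_le_of_pos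
    (hf.mono Set.inter_subset_right) fun x hx => hpos x hx.2
  refine ⟨min c (L / 2), lt_min hc (half_pos hL), fun x hx => ?_⟩
  by_cases hxK : x ∈ K
  · exact (min_le_left _ _).trans (hcK x ⟨hxK, hx⟩)
  · exact (min_le_right _ _).trans (hKf hxK).le

end

theorem isCompact_setOf_sum_sq_le (ι : Type*) [Fintype ι] (r : ℝ) :
    IsCompact {u : ι → ℝ | ∑ i, u i ^ 2 ≤ r} := by
  refine Metric.isCompact_of_isClosed_isBounded (isClosed_le (by fun_prop) continuous_const)
    ((Metric.isBounded_iff_subset_closedBall 0).2 ⟨√r, fun u hu => ?_⟩)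
  rw [mem_closedBall_zero_iff, pi_norm_le_iff_of_nonneg (sqrt_nonneg r)]
  exact fun i => Real.abs_le_sqrt
    ((Finset.single_le_sum (fun j _ => sq_nonneg (u j)) (Finset.mem_univ i)).trans hu)

theorem integral_mul_one_sub_cos_pos {V : Type*} [NormedAddCommGroup V] [NormedSpace ℝ V]
    [FiniteDimensional ℝ V] [MeasurableSpace V] [BorelSpace V] {μ : Measure V}
    [μ.IsAddHaarMeasure] {J : V → ℝ} (hJ : Integrable J μ) (hJ0 : ∀ x, 0 ≤ J x)
    (hJpos : 0 < ∫ x, J x ∂μ) {ℓ : V →ₗ[ℝ] ℝ} (hℓ : ℓ ≠ 0) :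
    0 < ∫ x, J x * (1 - cos (ℓ x)) ∂μ := by
  have hcos : ∀ᵐ x ∂μ, cos (ℓ x) ≠ 1 :=
    (ae_comp_linearMap_mem_iff ℓ μ volume (ℓ.surjective_of_ne_zero hℓ)
      (measurableSet_eq_fun continuous_cos.measurable measurable_const).compl).2 ae_cos_ne_one
  have hf0 : 0 ≤ fun x => J x * (1 - cos (ℓ x)) := fun x =>
    mul_nonneg (hJ0 x) (sub_nonneg.2 (cos_le_one _))
  have hfi : Integrable (fun x => J x * (1 - cos (ℓ x))) μ := by
    have := ℓ.continuous_of_finiteDimensional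
    refine hJ.mul_bdd (c := 2) (by fun_prop) (ae_of_all _ fun x => ?_)
    rw [norm_eq_abs, abs_le]
    constructor <;> linarith [cos_le_one (ℓ x), neg_one_le_cos (ℓ x)]
  refine (integral_nonneg hf0).lt_of_ne fun h => hJpos.ne' (integral_eq_zero_of_ae ?_)
  filter_upwards [(integral_eq_zero_iff_of_nonneg hf0 hfi).1 h.symm, hcos] with x hx hx'
  exact (mul_eq_zero.1 hx).resolve_right (sub_ne_zero.2 hx'.symm)

/-- The factor `(2π)⁻¹` converts Mathlib's character `𝐞 t = exp (2π i t)` to the convention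
`exp (-i ξ ⬝ᵥ x)` of `FT`. -/
def fourierDual (n : ℕ) : (Fin n → ℝ) ≃L[ℝ] StrongDual ℝ (Fin n → ℝ) :=
  ((LinearEquiv.smulOfNeZero ℝ _ (2 * π)⁻¹ (by positivity)).trans
    ((dotProductEquiv ℝ (Fin n)).trans LinearMap.toContinuousLinearMap)).toContinuousLinearEquiv

theorem fourierDual_apply {n : ℕ} (ξ x : Fin n → ℝ) :
    fourierDual n ξ x = (2 * π)⁻¹ * (ξ ⬝ᵥ x) := by
  simp [fourierDual]

theorem FT_eq_fourierIntegral_comp {n : ℕ} (J : (Fin n → ℝ) → ℝ) :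
    FT J = VectorFourier.fourierIntegral 𝐞 volume (topDualPairing ℝ (Fin n → ℝ)).flip
      (fun x => (J x : ℂ)) ∘ fourierDual n := by
  ext ξ
  simp only [FT, Function.comp_apply, VectorFourier.fourierIntegral, LinearMap.flip_apply,
    topDualPairing_apply, fourierDual_apply, Real.fourierChar_apply, Circle.smul_def]
  congr 1 with x
  congr 2
  rw [dotProduct, mul_neg, ← mul_assoc, mul_inv_cancel₀ (by positivity), one_mul,
    Complex.ofReal_neg]
  ring

theorem continuous_FT {n : ℕ} {J : (Fin n → ℝ) → ℝ} (hJ : Integrable J) :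
    Continuous (FT J) := by
  rw [FT_eq_fourierIntegral_comp]
  exact (VectorFourier.fourierIntegral_continuous continuous_fourierChar
    (continuous_snd.clm_apply continuous_fst) hJ.ofReal).comp (fourierDual n).continuous

theorem tendsto_FT_cocompact {n : ℕ} (J : (Fin n → ℝ) → ℝ) :
    Tendsto (FT J) (cocompact _) (𝓝 0) := by
  rw [FT_eq_fourierIntegral_comp]
  exact (Real.zero_at_infty_vector_fourierIntegral _ volume).comp
    (fourierDual n).toHomeomorph.toCocompactMap.cocompact_tendsto'

theorem FT_re {n : ℕ} {J : (Fin n → ℝ) → ℝ} (hJ : Integrable J) (ξ : Fin n → ℝ) :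
    (FT J ξ).re = ∫ x, J x * cos (ξ ⬝ᵥ x) := by
  have hexp : ∀ x, Complex.exp (-(Complex.I * ((ξ ⬝ᵥ x : ℝ) : ℂ))) =
      Complex.exp ((-(ξ ⬝ᵥ x) : ℝ) * Complex.I) := fun x => by push_cast; ring_nf
  have hi : Integrable fun x => Complex.exp (-(Complex.I * ((ξ ⬝ᵥ x : ℝ) : ℂ))) * (J x : ℂ) :=
    hJ.ofReal.bdd_mul (c := 1) (by fun_prop)
      (ae_of_all _ fun x => by rw [hexp, Complex.norm_exp_ofReal_mul_I])
  refine (integral_re hi).symm.trans (integral_congr_ae (ae_of_all _ fun x => ?_))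
  simp [hexp, Complex.exp_ofReal_mul_I_re, mul_comm]

theorem FT_zero_sub_re {n : ℕ} {J : (Fin n → ℝ) → ℝ} (hJ : Integrable J) (ξ : Fin n → ℝ) :
    (FT J 0 - FT J ξ).re = ∫ x, J x * (1 - cos (ξ ⬝ᵥ x)) := by
  have hcos : Integrable fun x => J x * cos (ξ ⬝ᵥ x) :=
    hJ.mul_bdd (c := 1) (by fun_prop) (ae_of_all _ fun x => abs_cos_le_one _)
  simp only [Complex.sub_re, FT_re hJ, zero_dotProduct, cos_zero, mul_one, mul_sub,
    integral_sub hJ hcos]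

section

variable {n : ℕ}

def sincMoment (J : (Fin n → ℝ) → ℝ) (t : ℝ) (u : Fin n → ℝ) : ℝ :=
  ∫ x, J x * (x ⬝ᵥ u) ^ 2 * sinc (t * (x ⬝ᵥ u) / 2) ^ 2

theorem integral_mul_one_sub_cos_smul_dotProduct (J : (Fin n → ℝ) → ℝ) (t : ℝ)
    (u : Fin n → ℝ) :
    ∫ x, J x * (1 - cos ((t • u) ⬝ᵥ x)) = t ^ 2 / 2 * sincMoment J t u := by
  rw [sincMoment, ← integral_const_mul]
  congr with x
  rw [smul_dotProduct, dotProduct_comm, smul_eq_mul, one_sub_cos_eq_sq_mul_sinc_sq, mul_div_assoc]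
  ring

theorem sincMoment_zero (J : (Fin n → ℝ) → ℝ) (u : Fin n → ℝ) :
    sincMoment J 0 u = ∫ x, J x * (x ⬝ᵥ u) ^ 2 := by
  simp [sincMoment]

variable {J : (Fin n → ℝ) → ℝ}

theorem integral_mul_one_sub_cos_dotProduct_pos (hJ : Integrable J) (hJ0 : ∀ x, 0 ≤ J x)
    (hJpos : 0 < ∫ x, J x) {ξ : Fin n → ℝ} (hξ : ξ ≠ 0) :
    0 < ∫ x, J x * (1 - cos (ξ ⬝ᵥ x)) :=
  integral_mul_one_sub_cos_pos hJ hJ0 hJpos (ℓ := dotProductEquiv ℝ (Fin n) ξ)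
    ((dotProductEquiv ℝ (Fin n)).map_ne_zero_iff.2 hξ)

theorem continuousOn_sincMoment (hJ : Integrable J)
    (hmom : ∀ k j : Fin n, Integrable fun x => J x * x k * x j) :
    ContinuousOn (fun p : ℝ × (Fin n → ℝ) => sincMoment J p.1 p.2)
      (Set.univ ×ˢ {u | ∑ i, u i ^ 2 ≤ 1}) := by
  have hbound : Integrable fun x => |J x| * ∑ i, x i ^ 2 := by
    refine (integrable_finsetSum Finset.univ fun i _ => (hmom i i).abs).congr
      (ae_of_all _ fun x => ?_)
    simp only [Finset.mul_sum, abs_mul, mul_assoc, abs_mul_abs_self, sq]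
  refine continuousOn_of_dominated
    (F := fun (p : ℝ × (Fin n → ℝ)) x => J x * (x ⬝ᵥ p.2) ^ 2 * sinc (p.1 * (x ⬝ᵥ p.2) / 2) ^ 2)
    (fun p _ => (hJ.aestronglyMeasurable.mul (by fun_prop)).mul (by fun_prop))
    (fun p hp => ae_of_all _ fun x => ?_) hbound
    (ae_of_all _ fun x => Continuous.continuousOn (by fun_prop))
  have hcs : (x ⬝ᵥ p.2) ^ 2 ≤ ∑ i, x i ^ 2 :=
    (Finset.sum_mul_sq_le_sq_mul_sq _ _ _).trans (mul_le_of_le_one_right (by positivity) hp.2)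
  have hs : sinc (p.1 * (x ⬝ᵥ p.2) / 2) ^ 2 ≤ 1 := by
    rw [sq_le_one_iff_abs_le_one]; exact abs_sinc_le_one _
  rw [norm_eq_abs, abs_mul, abs_mul, abs_sq, abs_sq, mul_assoc]
  exact mul_le_mul_of_nonneg_left ((mul_le_of_le_one_right (sq_nonneg _) hs).trans hcs)
    (abs_nonneg _)

theorem sincMoment_pos (hJ : Integrable J) (hJ0 : ∀ x, 0 ≤ J x) (hJpos : 0 < ∫ x, J x)
    (hposdef : ∀ v : Fin n → ℝ, v ≠ 0 → 0 < ∫ x, J x * (x ⬝ᵥ v) ^ 2) {t : ℝ} (ht : 0 ≤ t)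
    {u : Fin n → ℝ} (hu : u ≠ 0) : 0 < sincMoment J t u := by
  rcases ht.eq_or_lt with rfl | ht
  · rw [sincMoment_zero]
    exact hposdef u hu
  · have h := integral_mul_one_sub_cos_dotProduct_pos hJ hJ0 hJpos (smul_ne_zero ht.ne' hu)
    rw [integral_mul_one_sub_cos_smul_dotProduct] at h
    exact pos_of_mul_pos_right h (by positivity)

theorem exists_pos_mul_sum_sq_le_integral_mul_one_sub_cos (hJ : Integrable J)
    (hJ0 : ∀ x, 0 ≤ J x) (hJpos : 0 < ∫ x, J x)
    (hmom : ∀ k j : Fin n, Integrable fun x => J x * x k * x j)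
    (hposdef : ∀ v : Fin n → ℝ, v ≠ 0 → 0 < ∫ x, J x * (x ⬝ᵥ v) ^ 2) :
    ∃ c > 0, ∀ ξ : Fin n → ℝ, ∑ i, ξ i ^ 2 ≤ 1 →
      c * ∑ i, ξ i ^ 2 ≤ ∫ x, J x * (1 - cos (ξ ⬝ᵥ x)) := by
  set S := {u : Fin n → ℝ | ∑ i, u i ^ 2 = 1}
  have hS : IsCompact S := (isCompact_setOf_sum_sq_le (Fin n) 1).of_isClosed_subset
    (isClosed_eq (by fun_prop) continuous_const) fun u hu => hu.le
  have hS0 : ∀ u ∈ S, u ≠ 0 := fun u hu h => by simp [S, h] at hu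
  obtain ⟨c, hc, hcK⟩ := (isCompact_Icc.prod hS).exists_pos_forall_le_of_pos
    ((continuousOn_sincMoment hJ hmom).mono (Set.prod_mono (Set.subset_univ _) fun u hu => hu.le))
    fun p hp => sincMoment_pos hJ hJ0 hJpos hposdef hp.1.1 (hS0 _ hp.2)
  refine ⟨c / 2, half_pos hc, fun ξ hξ => ?_⟩
  rcases (by positivity : 0 ≤ ∑ i, ξ i ^ 2).eq_or_lt with hzero | hsum
  · rw [← hzero, mul_zero]
    exact integral_nonneg fun x => mul_nonneg (hJ0 x) (sub_nonneg.2 (cos_le_one _))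
  set t := √(∑ i, ξ i ^ 2)
  have ht : 0 < t := sqrt_pos.2 hsum
  have ht2 : t ^ 2 = ∑ i, ξ i ^ 2 := sq_sqrt hsum.le
  have hu : t⁻¹ • ξ ∈ S := by
    show ∑ i, (t⁻¹ • ξ) i ^ 2 = 1
    simp only [Pi.smul_apply, smul_eq_mul, mul_pow, ← Finset.mul_sum,
      inv_pow, ht2, inv_mul_cancel₀ hsum.ne']
  calc c / 2 * ∑ i, ξ i ^ 2 = t ^ 2 / 2 * c := by rw [ht2]; ring
    _ ≤ t ^ 2 / 2 * sincMoment J t (t⁻¹ • ξ) := by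
      gcongr
      exact hcK (t, t⁻¹ • ξ) ⟨⟨ht.le, sqrt_le_one.2 hξ⟩, hu⟩
    _ = ∫ x, J x * (1 - cos (ξ ⬝ᵥ x)) := by
      rw [← integral_mul_one_sub_cos_smul_dotProduct, smul_inv_smul₀ ht.ne']

end

theorem psi_positive_lower_bounds_general (n : ℕ) (J : (Fin n → ℝ) → ℝ)
    (hint : Integrable J) (hpos : ∀ x, 0 ≤ J x)
    (hne : 0 < ∫ x : Fin n → ℝ, J x)
    (hmomint : ∀ k j : Fin n, Integrable fun x : Fin n → ℝ => J x * x k * x j)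
    (hposdef : ∀ v : Fin n → ℝ, v ≠ 0 →
      0 < ∫ x : Fin n → ℝ, J x * (∑ i, x i * v i) ^ 2)
    (Ψ : (Fin n → ℝ) → ℝ)
    (hΨ : ∀ ξ, Ψ ξ = ((2 * π) ^ n)⁻¹ * (FT J 0 - FT J ξ).re) :
    (∀ ξ : Fin n → ℝ, ξ ≠ 0 → 0 < Ψ ξ) ∧
    (0 < ((2 * π) ^ n)⁻¹ * (FT J 0).re ∧
      Tendsto Ψ (cocompact (Fin n → ℝ)) (nhds (((2 * π) ^ n)⁻¹ * (FT J 0).re))) ∧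
    (∃ c₀ > (0:ℝ), ∃ c₁ > (0:ℝ),
      (∀ ξ : Fin n → ℝ, (∑ i, ξ i ^ 2) ≤ 1 → c₀ * ∑ i, ξ i ^ 2 ≤ Ψ ξ) ∧
      (∀ ξ : Fin n → ℝ, 1 ≤ (∑ i, ξ i ^ 2) → c₁ ≤ Ψ ξ)) := by
  set C : ℝ := ((2 * π) ^ n)⁻¹
  have hC : 0 < C := by positivity
  have hΨ_cos : ∀ ξ, Ψ ξ = C * ∫ x, J x * (1 - cos (ξ ⬝ᵥ x)) := fun ξ => by
    rw [hΨ, FT_zero_sub_re hint]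
  have hΨ_pos : ∀ ξ : Fin n → ℝ, ξ ≠ 0 → 0 < Ψ ξ := fun ξ hξ => by
    rw [hΨ_cos]
    exact mul_pos hC (integral_mul_one_sub_cos_dotProduct_pos hint hpos hne hξ)
  have hΨ_re : Ψ = fun ξ => C * ((FT J 0).re - (FT J ξ).re) := by
    ext ξ
    rw [hΨ, Complex.sub_re]
  have hlim_pos : 0 < C * (FT J 0).re := by
    rw [FT_re hint]
    simpa using mul_pos hC hne
  have hlim : Tendsto Ψ (cocompact _) (𝓝 (C * (FT J 0).re)) := by
    rw [hΨ_re]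
    simpa using (((Complex.continuous_re.tendsto 0).comp (tendsto_FT_cocompact J)).const_sub
      (FT J 0).re).const_mul C
  have hcont : Continuous Ψ := by
    rw [hΨ_re]
    exact continuous_const.mul (continuous_const.sub
      (Complex.continuous_re.comp (continuous_FT hint)))
  obtain ⟨c₀, hc₀, hsmall⟩ :=
    exists_pos_mul_sum_sq_le_integral_mul_one_sub_cos hint hpos hne hmomint hposdef
  obtain ⟨c₁, hc₁, hlarge⟩ := exists_pos_forall_le_of_tendsto_cocompact
    (S := {ξ | 1 ≤ ∑ i, ξ i ^ 2}) (isClosed_le continuous_const (by fun_prop)) hcont.continuousOn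
    (fun ξ hξ => hΨ_pos ξ (by rintro rfl; norm_num at hξ)) hlim_pos hlim
  refine ⟨hΨ_pos, ⟨hlim_pos, hlim⟩, C * c₀, by positivity, c₁, hc₁, fun ξ hξ => ?_, hlarge⟩
  rw [hΨ_cos, mul_assoc]
  exact mul_le_mul_of_nonneg_left (hsmall ξ hξ) hC.le

/-- for J ∈ L¹(ℝⁿ) nonnegative, even, not identically zero
(∫ J > 0), with finite second moments whose second-moment matrix is positive
definite, Ψ(ξ) = (2π)^{-n}(𝓕[J](0) − 𝓕[J](ξ)) is positive away from 0, tends to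
(2π)^{-n}𝓕[J](0) > 0 at infinity (Riemann–Lebesgue), and admits the lower bounds
Ψ(ξ) ≥ c₀|ξ|² for |ξ| ≤ 1 and Ψ(ξ) ≥ c₁ for |ξ| ≥ 1. -/
theorem psi_positive_lower_bounds (n : ℕ) (J : (Fin n → ℝ) → ℝ)
    (hint : Integrable J) (hpos : ∀ x, 0 ≤ J x) (heven : ∀ x, J (-x) = J x)
    (hne : 0 < ∫ x : Fin n → ℝ, J x)
    (hmomint : ∀ k j : Fin n, Integrable fun x : Fin n → ℝ => J x * x k * x j)
    (hposdef : ∀ v : Fin n → ℝ, v ≠ 0 →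
      0 < ∫ x : Fin n → ℝ, J x * (∑ i, x i * v i) ^ 2)
    (Ψ : (Fin n → ℝ) → ℝ)
    (hΨ : ∀ ξ, Ψ ξ = ((2 * π) ^ n)⁻¹ * (FT J 0 - FT J ξ).re) :
    (∀ ξ : Fin n → ℝ, ξ ≠ 0 → 0 < Ψ ξ) ∧
    (0 < ((2 * π) ^ n)⁻¹ * (FT J 0).re ∧
      Tendsto Ψ (cocompact (Fin n → ℝ)) (nhds (((2 * π) ^ n)⁻¹ * (FT J 0).re))) ∧
    (∃ c₀ > (0:ℝ), ∃ c₁ > (0:ℝ),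
      (∀ ξ : Fin n → ℝ, (∑ i, ξ i ^ 2) ≤ 1 → c₀ * ∑ i, ξ i ^ 2 ≤ Ψ ξ) ∧
      (∀ ξ : Fin n → ℝ, 1 ≤ (∑ i, ξ i ^ 2) → c₁ ≤ Ψ ξ)) :=
  psi_positive_lower_bounds_general n J hint hpos hne hmomint hposdef Ψ hΨ
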